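/- arXiv:0708.0516 — 3 statements merged into one kernel-verified Lean document; each statement's English description precedes it below -/
import Mathlib

section
/- The super-centre of the fibrewise deformed algebra (Sym(V*) ⊗ Sym(V) ⊗ Λ(V*)[[λ]], ∘_κ) consists exactly of the elements with symmetric V*-degree 0 and symmetric V-degree 0, i.e. a super-commutes with all elements (ad_κ(a) = 0) iff a ∈ Λ(V*)[[λ]]. -/
/- Setup (from Statement 6): the fibrewise κ-ordered product
`a ∘_κ b = μ ∘ exp(-(1-κ) iλ Σ_α i_s(e^α)⊗i_s(e_α) + κ iλ Σ_α i_s(e_α)⊗i_s(e^α))(a ⊗ b)`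
on `Sym(V*) ⊗ Sym(V)` over `ℂ[[λ]]` is associative for every `κ ∈ ℝ`.
Model: `Sym(V*) ⊗ Sym(V)` is the polynomial algebra in variables `x_α = inl α`
(for `Sym V*`) and `y_α = inr α` (for `Sym V`) with coefficients in
`ℂ[[λ]]`; `i_s(e_α) = ∂/∂x_α` and `i_s(e^α) = ∂/∂y_α`. -/

namespace Stmt6

noncomputable section

abbrev Rg : Type := PowerSeries ℂ

/-- `iλ` as a formal power series. -/
def il : Rg := PowerSeries.C Complex.I * PowerSeries.X

/-- `Sym(V*) ⊗ Sym(V)` for `V = ℂⁿ`. -/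
abbrev A (n : ℕ) := MvPolynomial (Fin n ⊕ Fin n) Rg

/-- Two commuting copies, modelling `(Sym(V*) ⊗ Sym(V)) ⊗ (Sym(V*) ⊗ Sym(V))`. -/
abbrev T (n : ℕ) := MvPolynomial ((Fin n ⊕ Fin n) ⊕ (Fin n ⊕ Fin n)) Rg

/-- The exponent `-(1-κ) iλ Σ_α i_s(e^α)⊗i_s(e_α) + κ iλ Σ_α i_s(e_α)⊗i_s(e^α)`. -/
def Nop (n : ℕ) (κ : ℝ) (p : T n) : T n :=
  ∑ α : Fin n,
    (((-(1 - (κ : ℂ))) • il) •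
        MvPolynomial.pderiv (Sum.inl (Sum.inr α))
          (MvPolynomial.pderiv (Sum.inr (Sum.inl α)) p) +
      (((κ : ℂ)) • il) •
        MvPolynomial.pderiv (Sum.inl (Sum.inl α))
          (MvPolynomial.pderiv (Sum.inr (Sum.inr α)) p))

/-- The exponential `exp(Nop)`; the series terminates on each polynomial since
each application of `Nop` lowers the total degree by 2. -/
def expN (n : ℕ) (κ : ℝ) (p : T n) : T n :=
  ∑ k ∈ Finset.range (p.totalDegree + 1),
    ((k.factorial : ℂ)⁻¹) • (Nop n κ)^[k] p

/-- `a ⊗ b` realized in the two commuting copies. -/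
def joinLR (n : ℕ) (a b : A n) : T n :=
  (MvPolynomial.rename Sum.inl a) * (MvPolynomial.rename Sum.inr b)

/-- The multiplication map `μ`, identifying the two copies. -/
def merge (n : ℕ) : T n →ₐ[Rg] A n := MvPolynomial.rename (Sum.elim id id)

/-- The fibrewise κ-ordered product `∘_κ`. -/
def starK (n : ℕ) (κ : ℝ) (a b : A n) : A n := merge n (expN n κ (joinLR n a b))

/-- `Sym(V*) ⊗ Sym(V) ⊗ Λ(V*)[[λ]]`: the exterior factor is realized on the
basis `e_S`, `S ⊆ Fin n`. -/
abbrev FA (n : ℕ) := Finset (Fin n) →₀ A n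

/-- Koszul sign of `e_S ∧ e_T` for disjoint `S`, `T`. -/
def wsign (n : ℕ) (S T : Finset (Fin n)) : ℂ :=
  (-1 : ℂ) ^ ((S ×ˢ T).filter fun p => p.2 < p.1).card

/-- The κ-ordered fibrewise super-commutator `ad_κ(x) y = x ∘_κ y - (-1)^{|x||y|} y ∘_κ x`,
computed on the Λ-graded components. -/
def adK (n : ℕ) (κ : ℝ) (x y : FA n) : FA n :=
  x.sum fun S p => y.sum fun T q =>
    (if Disjoint S T then
        wsign n S T • Finsupp.single (S ∪ T) (starK n κ p q) else 0)
    - ((-1 : ℂ) ^ (S.card * T.card)) •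
      (if Disjoint T S then
        wsign n T S • Finsupp.single (T ∪ S) (starK n κ q p) else 0)

end

end Stmt6

/- The exponential defining `∘_κ` stops after its first-order term as soon as one factor has
degree at most one, so for a linear `q` the commutator `p ∘_κ q - q ∘_κ p` is `iλ {p, q}`, the
Poisson bracket, whatever `κ` is. Bracketing with `y_α` and `x_α` gives `iλ ∂p/∂x_α` and
`-iλ ∂p/∂y_α`; as `iλ` is not a zero divisor and we are in characteristic zero, the coefficients
of a super-central element are constants. Conversely constants are central for `∘_κ`, and the
Koszul signs satisfy `sign(e_S ∧ e_T) = (-1)^{|S||T|} sign(e_T ∧ e_S)`, so elements of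
`Λ(V*)[[λ]]` super-commute with everything. -/

namespace MvPolynomial

variable {R σ τ : Type*} [CommSemiring R]

theorem eq_C_of_forall_pderiv_eq_zero [NoZeroDivisors R] [CharZero R] {p : MvPolynomial σ R}
    (h : ∀ i, pderiv i p = 0) : p = C (coeff 0 p) := by
  classical
  ext m
  rw [coeff_C]
  split_ifs with hm
  · rw [hm]
  obtain ⟨i, hi⟩ : ∃ i, m i ≠ 0 := by
    by_contra! hzero
    exact hm (Finsupp.ext hzero).symm
  have hle : Finsupp.single i 1 ≤ m := Finsupp.single_le_iff.mpr (Nat.one_le_iff_ne_zero.mpr hi)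
  have key := coeff_pderiv (i := i) p (m - Finsupp.single i 1)
  rw [h i, coeff_zero, tsub_add_cancel_of_le hle] at key
  exact (mul_eq_zero.mp key.symm).resolve_right (Nat.cast_add_one_ne_zero _)

theorem pderiv_inr_rename_inl (j : τ) (p : MvPolynomial σ R) :
    pderiv (Sum.inr j) (rename Sum.inl p : MvPolynomial (σ ⊕ τ) R) = 0 :=
  pderiv_eq_zero_of_notMem_vars fun hj => by
    obtain ⟨i, -, hi⟩ := mem_vars_rename _ _ hj
    exact Sum.inl_ne_inr hi

theorem pderiv_inl_rename_inr (j : σ) (p : MvPolynomial τ R) :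
    pderiv (Sum.inl j) (rename Sum.inr p : MvPolynomial (σ ⊕ τ) R) = 0 :=
  pderiv_eq_zero_of_notMem_vars fun hj => by
    obtain ⟨i, -, hi⟩ := mem_vars_rename _ _ hj
    exact Sum.inr_ne_inl hi

end MvPolynomial

theorem Finset.card_filter_snd_lt_add_card_filter_snd_lt {α : Type*} [LinearOrder α]
    {S T : Finset α} (hd : Disjoint S T) :
    ((S ×ˢ T).filter fun p => p.2 < p.1).card + ((T ×ˢ S).filter fun p => p.2 < p.1).card =
      S.card * T.card := by
  have hswap : ((T ×ˢ S).filter fun p => p.2 < p.1).card =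
      ((S ×ˢ T).filter fun p => ¬p.2 < p.1).card := by
    refine Finset.card_nbij' Prod.swap Prod.swap ?_ ?_ (fun _ _ => rfl) (fun _ _ => rfl)
    · intro p hp
      simp only [Finset.mem_coe, Finset.mem_filter, Finset.mem_product] at hp ⊢
      exact ⟨hp.1.symm, not_lt.mpr hp.2.le⟩
    · intro p hp
      simp only [Finset.mem_coe, Finset.mem_filter, Finset.mem_product] at hp ⊢
      refine ⟨hp.1.symm, lt_of_le_of_ne (not_lt.mp hp.2) fun h => ?_⟩
      have h' : p.1 = p.2 := h
      exact Finset.disjoint_left.mp hd hp.1.1 (h' ▸ hp.1.2)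
  rw [hswap, Finset.card_filter_add_card_filter_not, Finset.card_product]

namespace Stmt6

noncomputable section

open MvPolynomial

instance : CharZero Rg :=
  charZero_of_injective_algebraMap (FaithfulSMul.algebraMap_injective ℂ Rg)

section

variable {n : ℕ} {κ : ℝ}

theorem il_ne_zero : il ≠ 0 := fun h => by
  simpa [il] using congrArg (PowerSeries.coeff 1) h

theorem eq_zero_of_il_smul_eq_zero {p : A n} (h : il • p = 0) : p = 0 := by
  rw [smul_eq_C_mul] at h
  exact (mul_eq_zero.mp h).resolve_left (C_ne_zero.mpr il_ne_zero)

theorem pderiv_inr_joinLR (j : Fin n ⊕ Fin n) (p q : A n) :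
    pderiv (Sum.inr j) (joinLR n p q) = joinLR n p (pderiv j q) := by
  simp [joinLR, pderiv_inr_rename_inl, pderiv_rename Sum.inr_injective]

theorem pderiv_inl_joinLR (j : Fin n ⊕ Fin n) (p q : A n) :
    pderiv (Sum.inl j) (joinLR n p q) = joinLR n (pderiv j p) q := by
  simp [joinLR, pderiv_inl_rename_inr, pderiv_rename Sum.inl_injective, mul_comm]

theorem Nop_joinLR (p q : A n) :
    Nop n κ (joinLR n p q) = ∑ α : Fin n,
      (((-(1 - (κ : ℂ))) • il) • joinLR n (pderiv (Sum.inr α) p) (pderiv (Sum.inl α) q) +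
        ((κ : ℂ) • il) • joinLR n (pderiv (Sum.inl α) p) (pderiv (Sum.inr α) q)) := by
  simp only [Nop, pderiv_inr_joinLR, pderiv_inl_joinLR]

theorem Nop_joinLR_eq_zero_of_right {p q : A n} (hq : ∀ i : Fin n ⊕ Fin n, pderiv i q = 0) :
    Nop n κ (joinLR n p q) = 0 := by
  rw [Nop_joinLR]
  simp [hq, joinLR]

theorem Nop_joinLR_eq_zero_of_left {p q : A n} (hp : ∀ i : Fin n ⊕ Fin n, pderiv i p = 0) :
    Nop n κ (joinLR n p q) = 0 := by
  rw [Nop_joinLR]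
  simp [hp, joinLR]

def nopLinearMap (n : ℕ) (κ : ℝ) : T n →ₗ[Rg] T n where
  toFun := Nop n κ
  map_add' p q := by
    simp only [Nop, map_add, smul_add, ← Finset.sum_add_distrib]
    exact Finset.sum_congr rfl fun _ _ => by abel
  map_smul' r p := by
    simp only [Nop, Derivation.map_smul, Finset.smul_sum, smul_add, RingHom.id_apply,
      smul_comm r]

theorem nopLinearMap_apply (p : T n) : nopLinearMap n κ p = Nop n κ p := rfl

theorem Nop_zero : Nop n κ 0 = 0 := map_zero (nopLinearMap n κ)

theorem Nop_Nop_joinLR_eq_zero_of_right {p q : A n}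
    (hq : ∀ i j : Fin n ⊕ Fin n, pderiv i (pderiv j q) = 0) :
    Nop n κ (Nop n κ (joinLR n p q)) = 0 := by
  rw [← nopLinearMap_apply, Nop_joinLR, map_sum]
  refine Finset.sum_eq_zero fun α _ => ?_
  rw [map_add, LinearMap.map_smul, LinearMap.map_smul, nopLinearMap_apply, nopLinearMap_apply,
    Nop_joinLR_eq_zero_of_right fun i => hq i _, Nop_joinLR_eq_zero_of_right fun i => hq i _,
    smul_zero, smul_zero, add_zero]

theorem Nop_Nop_joinLR_eq_zero_of_left {p q : A n}
    (hp : ∀ i j : Fin n ⊕ Fin n, pderiv i (pderiv j p) = 0) :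
    Nop n κ (Nop n κ (joinLR n p q)) = 0 := by
  rw [← nopLinearMap_apply, Nop_joinLR, map_sum]
  refine Finset.sum_eq_zero fun α _ => ?_
  rw [map_add, LinearMap.map_smul, LinearMap.map_smul, nopLinearMap_apply, nopLinearMap_apply,
    Nop_joinLR_eq_zero_of_left fun i => hp i _, Nop_joinLR_eq_zero_of_left fun i => hp i _,
    smul_zero, smul_zero, add_zero]

theorem expN_eq_add_Nop {p : T n} (h : Nop n κ (Nop n κ p) = 0) :
    expN n κ p = p + Nop n κ p := by
  have hvanish : ∀ k ≥ 2, (Nop n κ)^[k] p = 0 := fun k hk => by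
    obtain ⟨m, rfl⟩ := Nat.exists_eq_add_of_le' hk
    rw [Function.iterate_add_apply, Function.iterate_succ_apply', Function.iterate_one, h,
      Function.iterate_fixed Nop_zero]
  obtain hd | hd := Nat.eq_zero_or_pos p.totalDegree
  · rw [totalDegree_eq_zero_iff_eq_C] at hd
    rw [hd]
    simp [expN, Nop]
  · rw [expN, ← Finset.sum_range_add_sum_Ico _ (show 2 ≤ p.totalDegree + 1 by omega),
      Finset.sum_eq_zero (s := Finset.Ico _ _) fun k hk => by
        rw [hvanish k (Finset.mem_Ico.mp hk).1, smul_zero]]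
    simp [Finset.sum_range_succ]

theorem merge_joinLR (p q : A n) : merge n (joinLR n p q) = p * q := by
  simp only [merge, joinLR, map_mul, rename_rename]
  congr <;> exact rename_id_apply _

theorem starK_eq_mul_add_of_Nop_Nop {p q : A n} (h : Nop n κ (Nop n κ (joinLR n p q)) = 0) :
    starK n κ p q = p * q + ∑ α : Fin n,
      (((-(1 - (κ : ℂ))) • il) • (pderiv (Sum.inr α) p * pderiv (Sum.inl α) q) +
        ((κ : ℂ) • il) • (pderiv (Sum.inl α) p * pderiv (Sum.inr α) q)) := by
  rw [starK, expN_eq_add_Nop h, Nop_joinLR]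
  simp only [map_add, map_sum, map_smul, merge_joinLR]

theorem starK_C_left (r : Rg) (q : A n) : starK n κ (C r) q = C r * q := by
  rw [starK_eq_mul_add_of_Nop_Nop (Nop_Nop_joinLR_eq_zero_of_left fun _ _ => by simp)]
  simp

theorem starK_C_right (r : Rg) (q : A n) : starK n κ q (C r) = q * C r := by
  rw [starK_eq_mul_add_of_Nop_Nop (Nop_Nop_joinLR_eq_zero_of_right fun _ _ => by simp)]
  simp

theorem starK_zero_left (p : A n) : starK n κ 0 p = 0 := by
  simpa using starK_C_left (κ := κ) 0 p

theorem starK_zero_right (p : A n) : starK n κ p 0 = 0 := by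
  simpa using starK_C_right (κ := κ) 0 p

theorem pderiv_pderiv_X (i j v : Fin n ⊕ Fin n) :
    pderiv i (pderiv j (X v : A n)) = 0 := by
  classical
  simp only [pderiv_X, Pi.single_apply]
  split_ifs <;> simp

def poisson (n : ℕ) (p q : A n) : A n :=
  ∑ α : Fin n,
    (pderiv (Sum.inl α) p * pderiv (Sum.inr α) q - pderiv (Sum.inr α) p * pderiv (Sum.inl α) q)

theorem starK_sub_starK_of_pderiv_pderiv_eq_zero {p q : A n}
    (hq : ∀ i j : Fin n ⊕ Fin n, pderiv i (pderiv j q) = 0) :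
    starK n κ p q - starK n κ q p = il • poisson n p q := by
  rw [starK_eq_mul_add_of_Nop_Nop (Nop_Nop_joinLR_eq_zero_of_right hq),
    starK_eq_mul_add_of_Nop_Nop (Nop_Nop_joinLR_eq_zero_of_left hq), mul_comm q p,
    add_sub_add_left_eq_sub, ← Finset.sum_sub_distrib, poisson, Finset.smul_sum]
  refine Finset.sum_congr rfl fun α _ => ?_
  have hcoeff : (κ : ℂ) • il - (-(1 - (κ : ℂ))) • il = il := by
    rw [← sub_smul, sub_neg_eq_add, add_sub_cancel, one_smul]
  rw [mul_comm (pderiv (Sum.inr α) q), mul_comm (pderiv (Sum.inl α) q)]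
  conv_rhs => rw [← hcoeff]
  simp only [sub_smul, smul_sub]
  abel

theorem poisson_X_inr (p : A n) (α : Fin n) :
    poisson n p (X (Sum.inr α)) = pderiv (Sum.inl α) p := by
  classical
  simp [poisson, pderiv_X, Pi.single_apply]

theorem poisson_X_inl (p : A n) (α : Fin n) :
    poisson n p (X (Sum.inl α)) = -pderiv (Sum.inr α) p := by
  classical
  simp [poisson, pderiv_X, Pi.single_apply]

theorem pderiv_eq_zero_of_forall_starK_sub_starK_eq_zero {p : A n}
    (h : ∀ q, starK n κ p q - starK n κ q p = 0) (i : Fin n ⊕ Fin n) : pderiv i p = 0 := by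
  apply eq_zero_of_il_smul_eq_zero
  rcases i with α | α
  · rw [← poisson_X_inr p α,
      ← starK_sub_starK_of_pderiv_pderiv_eq_zero (κ := κ) (pderiv_pderiv_X · · _), h]
  · rw [← neg_eq_zero, ← smul_neg, ← poisson_X_inl p α,
      ← starK_sub_starK_of_pderiv_pderiv_eq_zero (κ := κ) (pderiv_pderiv_X · · _), h]

theorem adK_single_empty_apply (a : FA n) (q : A n) (S : Finset (Fin n)) :
    adK n κ a (Finsupp.single ∅ q) S = starK n κ (a S) q - starK n κ q (a S) := by
  classical
  have hsum : adK n κ a (Finsupp.single ∅ q) =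
      a.sum fun S p => Finsupp.single S (starK n κ p q - starK n κ q p) := by
    refine Finsupp.sum_congr fun S _ => ?_
    rw [Finsupp.sum_single_index]
    · simp [wsign, Finsupp.single_sub]
    · simp only [starK_zero_left, starK_zero_right, Finsupp.single_zero, smul_zero, ite_self]
      exact sub_self (0 : FA n)
  rw [hsum, Finsupp.sum_apply, Finsupp.sum, Finset.sum_eq_single S]
  · simp
  · intro T _ hT
    simp [hT]
  · intro hS
    simp [Finsupp.notMem_support_iff.mp hS, starK_zero_left, starK_zero_right]

theorem wsign_eq_neg_one_pow_mul {S T : Finset (Fin n)} (hd : Disjoint S T) :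
    wsign n S T = (-1) ^ (S.card * T.card) * wsign n T S := by
  rw [wsign, wsign, ← Finset.card_filter_snd_lt_add_card_filter_snd_lt hd, pow_add, mul_assoc,
    ← pow_add, Even.neg_one_pow ⟨_, rfl⟩, mul_one]

theorem adK_eq_zero_of_forall_eq_C {a : FA n} (ha : ∀ S, ∃ r, a S = C r)
    (b : FA n) : adK n κ a b = 0 := by
  refine Finset.sum_eq_zero fun S _ => Finset.sum_eq_zero fun T _ => ?_
  obtain ⟨r, hr⟩ := ha S
  dsimp only
  by_cases hd : Disjoint S T
  · rw [if_pos hd, if_pos hd.symm, hr, starK_C_left, starK_C_right, mul_comm (b T),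
      Finset.union_comm T S, wsign_eq_neg_one_pow_mul hd, mul_smul]
    exact sub_self (_ : FA n)
  · rw [if_neg hd, if_neg fun h => hd h.symm, smul_zero]
    exact sub_self (0 : FA n)

end

theorem stmt8 (n : ℕ) (κ : ℝ) (a : FA n) :
    (∀ b : FA n, adK n κ a b = 0) ↔
      ∀ S : Finset (Fin n), ∃ r : Rg, a S = MvPolynomial.C r := by
  refine ⟨fun h S => ⟨_, eq_C_of_forall_pderiv_eq_zero fun i => ?_⟩,
    fun ha => adK_eq_zero_of_forall_eq_C ha⟩
  refine pderiv_eq_zero_of_forall_starK_sub_starK_eq_zero (κ := κ) (fun q => ?_) i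
  rw [← adK_single_empty_apply, h, Finsupp.zero_apply]

end

end Stmt6
end

section
/- For κ = 1/2 (Weyl ordering) and complex conjugation C with Cλ = λ: if CB = B then the Fedosov element satisfies Cr = r, the Fedosov derivation commutes with C, and the star product is Hermitian: C(f ★ g) = (Cg) ★ (Cf) for all f, g ∈ C^∞(E*)[[λ]]. -/
/-! Conjugation `C` maps solutions of the Fedosov equations to solutions, because it reverses
the order in the quadratic term and fixes `R` and `B`; by uniqueness `C r = r`. With `r` fixed,
`C` also maps the defining recursion of the Fedosov–Taylor series `τ(s)` to that of `τ(C s)`,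
so `C τ(s) = τ(C s)`, and the Hermitian property of the star product `σ(τ f ∘ τ g)` is then
the anti-multiplicativity of `C` for the fibrewise product. -/

section FedosovConjugation

variable {𝕜 W S : Type*} [CommSemiring 𝕜] [AddCommGroup W] [Module 𝕜 W]
  [AddCommGroup S] [Module 𝕜 S]

def IsFedosovSolution (δ δinv Dop : W →ₗ[𝕜] W) (Q : W →ₗ[𝕜] W →ₗ[𝕜] W) (R B a : W) : Prop :=
  δ a = Dop a + Q a a - R + B ∧ δinv a = 0

def IsFedosovTaylor (δinv Dop : W →ₗ[𝕜] W) (adW : W →ₗ[𝕜] W →ₗ[𝕜] W) (ι : S →ₗ[𝕜] W)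
    (r : W) (s : S) (a : W) : Prop :=
  a = ι s + δinv (Dop a + adW r a)

variable (Cw : W →+ W) (Cs : S →+ S)

theorem IsFedosovSolution.map_conj {δ δinv Dop : W →ₗ[𝕜] W} {Q : W →ₗ[𝕜] W →ₗ[𝕜] W}
    {R B a : W} (hCδ : ∀ a, Cw (δ a) = δ (Cw a)) (hCδinv : ∀ a, Cw (δinv a) = δinv (Cw a))
    (hCD : ∀ a, Cw (Dop a) = Dop (Cw a)) (hCQ : ∀ a b, Cw (Q a b) = Q (Cw b) (Cw a))
    (hCR : Cw R = R) (hCB : Cw B = B) (ha : IsFedosovSolution δ δinv Dop Q R B a) :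
    IsFedosovSolution δ δinv Dop Q R B (Cw a) := by
  obtain ⟨hδ, hδinv⟩ := ha
  constructor
  · rw [← hCδ, hδ]
    simp only [map_add, map_sub, hCD, hCQ, hCR, hCB]
  · rw [← hCδinv, hδinv, map_zero]

theorem conj_eq_of_isFedosovSolution_unique {δ δinv Dop : W →ₗ[𝕜] W}
    {Q : W →ₗ[𝕜] W →ₗ[𝕜] W} {R B r : W} (hr : IsFedosovSolution δ δinv Dop Q R B r)
    (huniq : ∀ a, IsFedosovSolution δ δinv Dop Q R B a → a = r)
    (hCδ : ∀ a, Cw (δ a) = δ (Cw a)) (hCδinv : ∀ a, Cw (δinv a) = δinv (Cw a))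
    (hCD : ∀ a, Cw (Dop a) = Dop (Cw a)) (hCQ : ∀ a b, Cw (Q a b) = Q (Cw b) (Cw a))
    (hCR : Cw R = R) (hCB : Cw B = B) :
    Cw r = r :=
  huniq _ (hr.map_conj Cw hCδ hCδinv hCD hCQ hCR hCB)

theorem IsFedosovTaylor.map_conj {δinv Dop : W →ₗ[𝕜] W} {adW : W →ₗ[𝕜] W →ₗ[𝕜] W}
    {ι : S →ₗ[𝕜] W} {r : W} {s : S} {a : W} (hCr : Cw r = r)
    (hCδinv : ∀ a, Cw (δinv a) = δinv (Cw a)) (hCD : ∀ a, Cw (Dop a) = Dop (Cw a))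
    (hCad : ∀ x a, Cw (adW x a) = adW (Cw x) (Cw a)) (hCι : ∀ s, Cw (ι s) = ι (Cs s))
    (ha : IsFedosovTaylor δinv Dop adW ι r s a) :
    IsFedosovTaylor δinv Dop adW ι r (Cs s) (Cw a) := by
  unfold IsFedosovTaylor at ha ⊢
  conv_lhs => rw [ha]
  rw [map_add, hCι, hCδinv, map_add, hCD, hCad, hCr]

theorem conj_fedosovDerivation {δ Dop : W →ₗ[𝕜] W} {adW : W →ₗ[𝕜] W →ₗ[𝕜] W} {r : W}
    (hCr : Cw r = r) (hCδ : ∀ a, Cw (δ a) = δ (Cw a)) (hCD : ∀ a, Cw (Dop a) = Dop (Cw a))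
    (hCad : ∀ x a, Cw (adW x a) = adW (Cw x) (Cw a)) (a : W) :
    Cw (-δ a + Dop a + adW r a) = -δ (Cw a) + Dop (Cw a) + adW r (Cw a) := by
  simp only [map_add, map_neg, hCδ, hCD, hCad, hCr]

theorem conj_starProduct {mulW : W →ₗ[𝕜] W →ₗ[𝕜] W} {σp : W →ₗ[𝕜] S} {τ : S →ₗ[𝕜] W}
    (hCmul : ∀ a b, Cw (mulW a b) = mulW (Cw b) (Cw a)) (hCσ : ∀ a, Cs (σp a) = σp (Cw a))
    (hCτ : ∀ s, Cw (τ s) = τ (Cs s)) (f g : S) :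
    Cs (σp (mulW (τ f) (τ g))) = σp (mulW (τ (Cs g)) (τ (Cs f))) := by
  rw [hCσ, hCmul, hCτ, hCτ]

end FedosovConjugation

theorem stmt15_general (W S : Type*) [AddCommGroup W] [Module ℂ W]
    [AddCommGroup S] [Module ℂ S]
    (Cw : W →+ W) (Cs : S →+ S)
    (δ δinv Dop : W →ₗ[ℂ] W)
    (Q adW mulW : W →ₗ[ℂ] W →ₗ[ℂ] W)
    (ι : S →ₗ[ℂ] W) (σp : W →ₗ[ℂ] S)
    (τ : S →ₗ[ℂ] W) (R B r : W)
    -- the Fedosov equations and their unique solvability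
    (hr : δ r = Dop r + Q r r - R + B) (hrinv : δinv r = 0)
    (huniq : ∀ a : W, δ a = Dop a + Q a a - R + B → δinv a = 0 → a = r)
    -- conjugation compatibilities
    (hCδ : ∀ a, Cw (δ a) = δ (Cw a)) (hCδinv : ∀ a, Cw (δinv a) = δinv (Cw a))
    (hCD : ∀ a, Cw (Dop a) = Dop (Cw a))
    (hCQ : ∀ a b, Cw (Q a b) = Q (Cw b) (Cw a))
    (hCR : Cw R = R) (hCB : Cw B = B)
    (hCad : ∀ x a, Cw (adW x a) = adW (Cw x) (Cw a))
    (hCmul : ∀ a b, Cw (mulW a b) = mulW (Cw b) (Cw a))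
    (hCι : ∀ s, Cw (ι s) = ι (Cs s)) (hCσ : ∀ a, Cs (σp a) = σp (Cw a))
    -- the Fedosov–Taylor series
    (hτ : ∀ s : S, τ s = ι s + δinv (Dop (τ s) + adW r (τ s)))
    (hτuniq : ∀ (s : S) (a : W), a = ι s + δinv (Dop a + adW r a) → a = τ s) :
    Cw r = r ∧
    (∀ a : W, Cw (-δ a + Dop a + adW r a) =
      -δ (Cw a) + Dop (Cw a) + adW r (Cw a)) ∧
    (∀ f g : S, Cs (σp (mulW (τ f) (τ g))) =
      σp (mulW (τ (Cs g)) (τ (Cs f)))) := by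
  have hCr : Cw r = r :=
    conj_eq_of_isFedosovSolution_unique Cw ⟨hr, hrinv⟩ (fun a ha => huniq a ha.1 ha.2)
      hCδ hCδinv hCD hCQ hCR hCB
  have hCτ : ∀ s, Cw (τ s) = τ (Cs s) := fun s =>
    hτuniq _ _ (IsFedosovTaylor.map_conj Cw Cs hCr hCδinv hCD hCad hCι (hτ s))
  exact ⟨hCr, conj_fedosovDerivation Cw hCr hCδ hCD hCad,
    conj_starProduct Cw Cs hCmul hCσ hCτ⟩

/-- for the Weyl-ordered (κ = 1/2) Fedosov construction with
`CB = B` (complex conjugation `C`, `Cλ = λ`): the Fedosov element satisfies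
`Cr = r`, the Fedosov derivation `-δ + D + (i/λ)ad(r)` commutes with `C`, and
the resulting star product is Hermitian, `C(f ★ g) = (Cg) ★ (Cf)`.
Abstract formulation: `Cw`/`Cs` are involutive antilinear maps on the Fedosov
algebra `W` and the symbol space `S` compatible with all the structure maps
(`δ`, `δ⁻¹`, `D`, the quadratic term `Q = (i/λ)(·∘·)` with
`C(Q a b) = Q (Cb) (Ca)`, the operator `ad = (i/λ)ad(·)(·)`, the fibrewise
Weyl product with `C(a∘b) = (Cb)∘(Ca)`, `ι` and `σ`), `r` the unique solution
of the Fedosov equations and `τ` the Fedosov–Taylor series; the star product is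
`f ★ g = σ(τ(f) ∘ τ(g))`. -/
theorem stmt15 (W S : Type*) [AddCommGroup W] [Module ℂ W]
    [AddCommGroup S] [Module ℂ S]
    (Cw : W →+ W) (Cs : S →+ S)
    (hCw2 : ∀ a, Cw (Cw a) = a) (hCs2 : ∀ s, Cs (Cs s) = s)
    (hCwsmul : ∀ (c : ℂ) (a : W), Cw (c • a) = (starRingEnd ℂ) c • Cw a)
    (hCssmul : ∀ (c : ℂ) (s : S), Cs (c • s) = (starRingEnd ℂ) c • Cs s)
    (δ δinv Dop : W →ₗ[ℂ] W)
    (Q adW mulW : W →ₗ[ℂ] W →ₗ[ℂ] W)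
    (ι : S →ₗ[ℂ] W) (σp : W →ₗ[ℂ] S)
    (τ : S →ₗ[ℂ] W) (R B r : W)
    -- the Fedosov equations and their unique solvability
    (hr : δ r = Dop r + Q r r - R + B) (hrinv : δinv r = 0)
    (huniq : ∀ a : W, δ a = Dop a + Q a a - R + B → δinv a = 0 → a = r)
    -- conjugation compatibilities
    (hCδ : ∀ a, Cw (δ a) = δ (Cw a)) (hCδinv : ∀ a, Cw (δinv a) = δinv (Cw a))
    (hCD : ∀ a, Cw (Dop a) = Dop (Cw a))
    (hCQ : ∀ a b, Cw (Q a b) = Q (Cw b) (Cw a))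
    (hCR : Cw R = R) (hCB : Cw B = B)
    (hCad : ∀ x a, Cw (adW x a) = adW (Cw x) (Cw a))
    (hCmul : ∀ a b, Cw (mulW a b) = mulW (Cw b) (Cw a))
    (hCι : ∀ s, Cw (ι s) = ι (Cs s)) (hCσ : ∀ a, Cs (σp a) = σp (Cw a))
    -- the Fedosov–Taylor series
    (hτ : ∀ s : S, τ s = ι s + δinv (Dop (τ s) + adW r (τ s)))
    (hτuniq : ∀ (s : S) (a : W), a = ι s + δinv (Dop a + adW r a) → a = τ s) :
    Cw r = r ∧
    (∀ a : W, Cw (-δ a + Dop a + adW r a) =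
      -δ (Cw a) + Dop (Cw a) + adW r (Cw a)) ∧
    (∀ f g : S, Cs (σp (mulW (τ f) (τ g))) =
      σp (mulW (τ (Cs g)) (τ (Cs f)))) :=
  stmt15_general W S Cw Cs δ δinv Dop Q adW mulW ι σp τ R B r hr hrinv huniq hCδ hCδinv hCD hCQ hCR
    hCB hCad hCmul hCι hCσ hτ hτuniq
end

section
/- For a Lie algebroid E over M with a positive density μ on M and a positive E-density ν, the map s ↦ tr ad(s) := div_μ(s) + div_ν(s) is C^∞(M)-linear, hence defines a section tr ad of E*; moreover d_E(tr ad) = 0, and changing μ to e^v μ and ν to e^w ν changes tr ad by the exact form d_E(v + w). Hence the modular class [tr ad] ∈ H¹_E(M) is well defined. -/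
theorem add_map_smul_of_opposite_anchor {R E : Type*} [CommRing R] [SMul R E]
    (ρ : E → R → R) (f g : E → R)
    (hf : ∀ (u : R) (s : E), f (u • s) = u * f s + ρ s u)
    (hg : ∀ (u : R) (s : E), g (u • s) = u * g s - ρ s u) (u : R) (s : E) :
    f (u • s) + g (u • s) = u * (f s + g s) := by
  rw [hf, hg]
  ring

theorem cocycle_add_of_bracket_eq {R E : Type*} [AddCommGroup R] [Bracket E E]
    (ρ : E → R → R) (hρ : ∀ (s : E) (u v : R), ρ s (u + v) = ρ s u + ρ s v)
    (f g : E → R)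
    (hf : ∀ s t : E, f ⁅s, t⁆ = ρ s (f t) - ρ t (f s))
    (hg : ∀ s t : E, g ⁅s, t⁆ = ρ s (g t) - ρ t (g s)) (s t : E) :
    ρ s (f t + g t) - ρ t (f s + g s) - (f ⁅s, t⁆ + g ⁅s, t⁆) = 0 := by
  rw [hf, hg, hρ, hρ]
  abel

/-- for a Lie algebroid (Lie–Rinehart algebra) with a positive
density `μ` on the base and a positive `E`-density `ν` — modeled by divergence
maps `div_μ`, `div_ν` with their characteristic properties — the map
`s ↦ tr ad(s) = div_μ(s) + div_ν(s)` is `R`-linear (hence a section of `E*`),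
is a `d_E`-cocycle, and changing `μ ↦ e^v μ`, `ν ↦ e^w ν` changes it by the
exact form `d_E(v + w)`; hence the modular class `[tr ad] ∈ H¹_E(M)` is well
defined. -/
theorem stmt16 (R E : Type*) [CommRing R] [LieRing E] [Module R E]
    (ρ : E → R → R)
    (hρaddR : ∀ (s : E) (u v : R), ρ s (u + v) = ρ s u + ρ s v)
    (divμ divν : E → R)
    (hμadd : ∀ s t : E, divμ (s + t) = divμ s + divμ t)
    (hνadd : ∀ s t : E, divν (s + t) = divν s + divν t)
    (hμsmul : ∀ (u : R) (s : E), divμ (u • s) = u * divμ s + ρ s u)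
    (hνsmul : ∀ (u : R) (s : E), divν (u • s) = u * divν s - ρ s u)
    (hμbr : ∀ s t : E, divμ ⁅s, t⁆ = ρ s (divμ t) - ρ t (divμ s))
    (hνbr : ∀ s t : E, divν ⁅s, t⁆ = ρ s (divν t) - ρ t (divν s)) :
    -- tr ad is R-linear (C^∞(M)-linear), hence a one-form
    (∀ (u : R) (s : E),
      divμ (u • s) + divν (u • s) = u * (divμ s + divν s)) ∧
    (∀ s t : E, divμ (s + t) + divν (s + t) =
      (divμ s + divν s) + (divμ t + divν t)) ∧
    -- d_E (tr ad) = 0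
    (∀ s t : E, ρ s (divμ t + divν t) - ρ t (divμ s + divν s)
      - (divμ ⁅s, t⁆ + divν ⁅s, t⁆) = 0) ∧
    -- gauging μ ↦ e^v μ, ν ↦ e^w ν shifts tr ad by the exact form d_E(v + w)
    (∀ (v w : R) (s : E),
      (divμ s + ρ s v) + (divν s + ρ s w)
        = (divμ s + divν s) + ρ s (v + w)) := by
  refine ⟨add_map_smul_of_opposite_anchor ρ divμ divν hμsmul hνsmul,
    fun s t => ?_, cocycle_add_of_bracket_eq ρ hρaddR divμ divν hμbr hνbr, fun v w s => ?_⟩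
  · rw [hμadd, hνadd]
    abel
  · rw [hρaddR]
    abel
end
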